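/- arXiv:2303.00666 — 4 statements merged into one kernel-verified Lean document; each statement's English description precedes it below -/
import Mathlib

section
/- Let a, c, d, e, C, r be real numbers with c, d, e, C > 0, a ≥ 3, and r ≥ max{2, 2·c^{1/(a−2)}}, and set D = max{2d, 2ce/C, e/C}. Then every function f : ℝ → ℝ satisfying f(x) ≤ e for all x ≤ 1, and f(x) ≤ c·r²·f(x/r) + d·r²·C·x^a for all x > 1, also satisfies f(M) ≤ D·r²·C·M^a for all M ≥ 1. -/
set_option maxHeartbeats 1600000 in
/-- The recurrence `f(M) ≤ c·r²·f(M/r) + d·r²·C·M^a` with base case `f(x) ≤ e` for `x ≤ 1`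
solves to `f(M) ≤ D·r²·C·M^a`. -/
theorem recurrence_solves (a c d e C r : ℝ)
    (hc : 0 < c) (hd : 0 < d) (he : 0 < e) (hC : 0 < C) (ha : 3 ≤ a)
    (hr : max 2 (2 * c ^ ((1:ℝ) / (a - 2))) ≤ r)
    (D : ℝ) (hD : D = max (max (2 * d) (2 * c * e / C)) (e / C))
    (f : ℝ → ℝ)
    (hbase : ∀ x ≤ (1:ℝ), f x ≤ e)
    (hrec : ∀ x > (1:ℝ), f x ≤ c * r ^ 2 * f (x / r) + d * r ^ 2 * C * x ^ a) :
    ∀ M ≥ (1:ℝ), f M ≤ D * r ^ 2 * C * M ^ a := by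
  have hr2 : (2:ℝ) ≤ r := le_trans (le_max_left _ _) hr
  have hrc : 2 * c ^ ((1:ℝ) / (a - 2)) ≤ r := le_trans (le_max_right _ _) hr
  have hr0 : (0:ℝ) < r := by linarith
  have ha2 : (1:ℝ) ≤ a - 2 := by linarith
  have ha0 : (0:ℝ) ≤ a := by linarith
  -- D bounds
  have hDd : 2 * d ≤ D := hD ▸ le_trans (le_max_left _ _) (le_max_left _ _)
  have hDce : 2 * c * e / C ≤ D := hD ▸ le_trans (le_max_right _ _) (le_max_left _ _)
  have hDe : e / C ≤ D := hD ▸ le_max_right _ _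
  have hD0 : 0 < D := by linarith
  -- key: 2 * c ≤ r ^ (a - 2)
  have hkey : 2 * c ≤ r ^ (a - 2) := by
    have h1 : (2 * c ^ ((1:ℝ) / (a - 2))) ^ (a - 2) ≤ r ^ (a - 2) :=
      Real.rpow_le_rpow (by positivity) hrc (by linarith)
    have h2 : (2 * c ^ ((1:ℝ) / (a - 2))) ^ (a - 2) = (2:ℝ) ^ (a - 2) * c := by
      rw [Real.mul_rpow (by norm_num) (by positivity), ← Real.rpow_mul hc.le,
        one_div, inv_mul_cancel₀ (by linarith : a - 2 ≠ 0), Real.rpow_one]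
    have h3 : (2:ℝ) ≤ (2:ℝ) ^ (a - 2) := by
      calc (2:ℝ) = (2:ℝ) ^ (1:ℝ) := (Real.rpow_one 2).symm
        _ ≤ (2:ℝ) ^ (a - 2) := Real.rpow_le_rpow_of_exponent_le (by norm_num) ha2
    nlinarith [h1, h2, h3]
  -- key2 : 2 * c * r^2 ≤ r ^ a (rpow)
  have hra : r ^ a = r ^ (a - 2) * r ^ (2:ℕ) := by
    rw [← Real.rpow_natCast r 2, ← Real.rpow_add hr0]
    norm_num
  have hkey2 : 2 * c * r ^ (2:ℕ) ≤ r ^ a := by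
    rw [hra]
    have h : (0:ℝ) < r ^ (2:ℕ) := by positivity
    nlinarith
  have hra0 : (0:ℝ) < r ^ a := Real.rpow_pos_of_pos hr0 a
  -- main induction
  have key : ∀ n : ℕ, ∀ M : ℝ, 1 ≤ M → M ≤ r ^ n → f M ≤ D * r ^ 2 * C * M ^ a := by
    intro n
    induction n with
    | zero =>
      intro M hM1 hMn
      simp only [pow_zero] at hMn
      have hM : M = 1 := le_antisymm hMn hM1
      subst hM
      rw [Real.one_rpow]
      have hf := hbase 1 le_rfl
      have heC : e ≤ D * C := (div_le_iff₀ hC).mp hDe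
      nlinarith [mul_le_mul_of_nonneg_left (show (1:ℝ) ≤ r ^ 2 by nlinarith)
        (mul_pos hD0 hC).le]
    | succ n ih =>
      intro M hM1 hMn
      by_cases hcase : M ≤ r ^ n
      · exact ih M hM1 hcase
      push_neg at hcase
      have hrn1 : (1:ℝ) ≤ r ^ n := one_le_pow₀ (by linarith)
      have hMgt1 : (1:ℝ) < M := lt_of_le_of_lt hrn1 hcase
      have hMa0 : (0:ℝ) < M ^ a := Real.rpow_pos_of_pos (by linarith) a
      have hMa1 : (1:ℝ) ≤ M ^ a := Real.one_le_rpow hM1 ha0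
      have hrecM := hrec M hMgt1
      have hrsq : (0:ℝ) < r ^ 2 := by positivity
      have hDdM : 2 * d * (r ^ 2 * C * M ^ a) ≤ D * (r ^ 2 * C * M ^ a) :=
        mul_le_mul_of_nonneg_right hDd
          (mul_nonneg (mul_nonneg hrsq.le hC.le) hMa0.le)
      by_cases h2 : M / r ≤ 1
      · have hf := hbase _ h2
        have h4 : c * r ^ 2 * f (M / r) ≤ c * r ^ 2 * e :=
          mul_le_mul_of_nonneg_left hf (by positivity)
        have hce : 2 * c * e ≤ D * C := (div_le_iff₀ hC).mp hDce
        have hA : (2 * c * e) * r ^ 2 ≤ (D * C) * r ^ 2 :=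
          mul_le_mul_of_nonneg_right hce hrsq.le
        have hB : D * C * r ^ 2 * 1 ≤ D * C * r ^ 2 * M ^ a :=
          mul_le_mul_of_nonneg_left hMa1 (by positivity)
        nlinarith [hrecM, h4, hA, hB, hDdM]
      · push_neg at h2
        have h1r : (1:ℝ) ≤ M / r := h2.le
        have h2r : M / r ≤ r ^ n := by
          rw [div_le_iff₀ hr0]
          calc M ≤ r ^ (n + 1) := hMn
            _ = r ^ n * r := pow_succ r n
        have hfr := ih (M / r) h1r h2r
        rw [Real.div_rpow (by linarith : (0:ℝ) ≤ M) hr0.le] at hfr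
        have hstep : c * r ^ 2 * f (M / r) ≤ c * r ^ 2 * (D * r ^ 2 * C * (M ^ a / r ^ a)) :=
          mul_le_mul_of_nonneg_left hfr (by positivity)
        have h5 : c * r ^ 2 * (D * r ^ 2 * C * (M ^ a / r ^ a))
            = (c * r ^ 2 / r ^ a) * (D * r ^ 2 * C * M ^ a) := by
          field_simp
        have h6 : c * r ^ 2 / r ^ a ≤ 1 / 2 := by
          rw [div_le_iff₀ hra0]
          linarith [hkey2]
        have h7 : (c * r ^ 2 / r ^ a) * (D * r ^ 2 * C * M ^ a)
            ≤ (1 / 2) * (D * r ^ 2 * C * M ^ a) := by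
          apply mul_le_mul_of_nonneg_right h6
          have : (0:ℝ) ≤ D * r ^ 2 * C := by positivity
          exact mul_nonneg this hMa0.le
        nlinarith [hrecM, hstep, h7, hDdM, h5]
  intro M hM
  obtain ⟨n, hn⟩ := pow_unbounded_of_one_lt M (show (1:ℝ) < r by linarith)
  exact key n M hM hn.le
end

section
/- Let c, d, C, D, r, M, a be real numbers with c, d, C > 0, M ≥ 0, a ≥ 3, r ≥ 2·c^{1/(a−2)}, and D ≥ 2d. Then c·D·r⁴·C·(M/r)^a + d·r²·C·M^a ≤ D·r²·C·M^a. -/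
/-- The key induction-step inequality in the recurrence lemma. -/
theorem recurrence_induction_step (c d C D r M a : ℝ)
    (hc : 0 < c) (hd : 0 < d) (hC : 0 < C) (hM : 0 ≤ M) (ha : 3 ≤ a)
    (hr : 2 * c ^ ((1:ℝ) / (a - 2)) ≤ r) (hD : 2 * d ≤ D) :
    c * D * r ^ 4 * C * (M / r) ^ a + d * r ^ 2 * C * M ^ a ≤ D * r ^ 2 * C * M ^ a := by
  have ha2 : (0:ℝ) < a - 2 := by linarith
  have hcp : 0 < c ^ ((1:ℝ)/(a-2)) := Real.rpow_pos_of_pos hc _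
  have hr0 : 0 < r := lt_of_lt_of_le (by positivity) hr
  have hX : 0 < r ^ (a-2) := Real.rpow_pos_of_pos hr0 _
  have hkey : 2 * c ≤ r ^ (a-2) := by
    have h1 : (2 * c ^ ((1:ℝ)/(a-2))) ^ (a-2) ≤ r ^ (a-2) :=
      Real.rpow_le_rpow (by positivity) hr ha2.le
    have h2 : (2 * c ^ ((1:ℝ)/(a-2))) ^ (a-2) = 2 ^ (a-2) * c := by
      rw [Real.mul_rpow (by norm_num) hcp.le, ← Real.rpow_mul hc.le,
        one_div_mul_cancel ha2.ne', Real.rpow_one]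
    have h3 : (2:ℝ) ≤ 2 ^ (a-2) := by
      calc (2:ℝ) = 2 ^ (1:ℝ) := (Real.rpow_one 2).symm
      _ ≤ 2 ^ (a-2) := Real.rpow_le_rpow_of_exponent_le (by norm_num) (by linarith)
    nlinarith [hc.le]
  have ht : 0 ≤ (M/r) ^ a := Real.rpow_nonneg (by positivity) _
  have hra : r ^ (a-2) * r ^ 2 = r ^ a := by
    rw [← Real.rpow_natCast r 2, ← Real.rpow_add hr0]
    norm_num
  have heq : (M/r) ^ a * (r ^ (a-2) * r ^ 2) = M ^ a := by
    rw [Real.div_rpow hM hr0.le, hra,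
      div_mul_cancel₀ _ (Real.rpow_pos_of_pos hr0 a).ne']
  have hsum : 0 ≤ D * r ^ (a-2) - d * r ^ (a-2) - c * D := by
    nlinarith [hd.le, hX.le]
  rw [← heq]
  nlinarith [mul_nonneg (mul_nonneg (mul_nonneg hC.le (pow_nonneg hr0.le 4)) ht) hsum]
end

section
/- Let s, t be distinct points of the Euclidean plane ℝ², let p be a point of the open segment between s and t, and let γ : ℝ → ℝ² be continuous on [0,1] with γ(0) = s, γ(1) = t, and p ∉ γ([0,1]). Then eVariationOn γ [0,1] > edist(s, t). -/
/-!
The continuous function `u ↦ ⟪γ u - p, t - s⟫` is `≤ 0` at `0` and `≥ 0` at `1`, so the path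
meets the hyperplane through `p` orthogonal to `t - s` at some point `q = γ u`. That hyperplane
meets the segment `[s, t]` only in `p`, and `q ≠ p`, so `q ∉ [s, t]`; by strict convexity of
the Euclidean norm, `dist s t < dist s q + dist q t`, and the right-hand side is at most the
length of the path.
-/

open Set
open scoped RealInnerProductSpace

theorem edist_lt_edist_add_edist_of_notMem_segment {E : Type*} [NormedAddCommGroup E]
    [NormedSpace ℝ E] [StrictConvexSpace ℝ E] {x y z : E} (hy : y ∉ segment ℝ x z) :
    edist x z < edist x y + edist y z := by
  rwa [edist_dist, edist_dist, edist_dist, ← ENNReal.ofReal_add dist_nonneg dist_nonneg,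
    ENNReal.ofReal_lt_ofReal_iff_of_nonneg dist_nonneg, dist_lt_dist_add_dist_iff,
    ← mem_segment_iff_wbtw]

theorem edist_add_edist_le_eVariationOn {α E : Type*} [LinearOrder α] [PseudoEMetricSpace E]
    (f : α → E) {a u b : α} (hau : a ≤ u) (hub : u ≤ b) :
    edist (f a) (f u) + edist (f u) (f b) ≤ eVariationOn f (Icc a b) :=
  calc edist (f a) (f u) + edist (f u) (f b)
      ≤ eVariationOn f (Icc a u) + eVariationOn f (Icc u b) :=
        add_le_add (eVariationOn.edist_le f ⟨le_rfl, hau⟩ ⟨hau, le_rfl⟩)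
          (eVariationOn.edist_le f ⟨le_rfl, hub⟩ ⟨hub, le_rfl⟩)
    _ ≤ eVariationOn f (Icc a u ∪ Icc u b) :=
        eVariationOn.add_le_union f fun _ hx _ hy => hx.2.trans hy.1
    _ = eVariationOn f (Icc a b) := by rw [Icc_union_Icc_eq_Icc hau hub]

section InnerProductSpace

variable {E : Type*} [NormedAddCommGroup E] [InnerProductSpace ℝ E]

theorem eq_of_mem_segment_of_inner_sub_eq_zero {x y p q : E} (hp : p ∈ segment ℝ x y)
    (hq : q ∈ segment ℝ x y) (horth : ⟪q - p, y - x⟫ = 0) : q = p := by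
  rw [segment_eq_image'] at hp hq
  obtain ⟨θ, -, rfl⟩ := hp
  obtain ⟨c, -, rfl⟩ := hq
  have hdiff : x + c • (y - x) - (x + θ • (y - x)) = (c - θ) • (y - x) := by module
  rw [hdiff, real_inner_smul_left, real_inner_self_eq_norm_sq] at horth
  rw [← sub_eq_zero, hdiff]
  rcases mul_eq_zero.1 horth with hcθ | hnorm
  · rw [hcθ, zero_smul]
  · rw [norm_eq_zero.1 (pow_eq_zero_iff two_ne_zero |>.1 hnorm), smul_zero]

theorem exists_inner_sub_eq_zero_of_mem_segment {γ : ℝ → E} {a b : ℝ} (hab : a ≤ b)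
    (hγ : ContinuousOn γ (Icc a b)) {p : E} (hp : p ∈ segment ℝ (γ a) (γ b)) :
    ∃ u ∈ Icc a b, ⟪γ u - p, γ b - γ a⟫ = 0 := by
  rw [segment_eq_image'] at hp
  obtain ⟨θ, ⟨hθ0, hθ1⟩, rfl⟩ := hp
  have hstart : γ a - (γ a + θ • (γ b - γ a)) = (-θ) • (γ b - γ a) := by module
  have hend : γ b - (γ a + θ • (γ b - γ a)) = (1 - θ) • (γ b - γ a) := by module
  refine intermediate_value_Icc hab ((hγ.sub continuousOn_const).inner continuousOn_const)
    ⟨?_, ?_⟩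
  · rw [Pi.sub_apply, hstart, real_inner_smul_left, real_inner_self_eq_norm_sq]
    exact mul_nonpos_of_nonpos_of_nonneg (neg_nonpos.2 hθ0) (sq_nonneg _)
  · rw [Pi.sub_apply, hend, real_inner_smul_left, real_inner_self_eq_norm_sq]
    exact mul_nonneg (sub_nonneg.2 hθ1) (sq_nonneg _)

end InnerProductSpace

theorem eVariationOn_gt_edist_of_avoids_general (s t p : EuclideanSpace ℝ (Fin 2))
    (hp : p ∈ openSegment ℝ s t)
    (γ : ℝ → EuclideanSpace ℝ (Fin 2)) (hγ : ContinuousOn γ (Set.Icc 0 1))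
    (h0 : γ 0 = s) (h1 : γ 1 = t) (hmiss : p ∉ γ '' Set.Icc 0 1) :
    edist s t < eVariationOn γ (Set.Icc 0 1) := by
  subst h0 h1
  have hp_seg := openSegment_subset_segment ℝ _ _ hp
  obtain ⟨u, hu, horth⟩ := exists_inner_sub_eq_zero_of_mem_segment zero_le_one hγ hp_seg
  have hu_off : γ u ∉ segment ℝ (γ 0) (γ 1) := fun hu_seg =>
    hmiss ⟨u, hu, eq_of_mem_segment_of_inner_sub_eq_zero hp_seg hu_seg horth⟩
  calc edist (γ 0) (γ 1) < edist (γ 0) (γ u) + edist (γ u) (γ 1) :=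
        edist_lt_edist_add_edist_of_notMem_segment hu_off
    _ ≤ eVariationOn γ (Icc 0 1) := edist_add_edist_le_eVariationOn γ hu.1 hu.2

/-- A path between distinct points `s` and `t` that avoids a point `p` of the open segment
between them is strictly longer than the Euclidean distance from `s` to `t`. -/
theorem eVariationOn_gt_edist_of_avoids (s t p : EuclideanSpace ℝ (Fin 2))
    (hst : s ≠ t) (hp : p ∈ openSegment ℝ s t)
    (γ : ℝ → EuclideanSpace ℝ (Fin 2)) (hγ : ContinuousOn γ (Set.Icc 0 1))
    (h0 : γ 0 = s) (h1 : γ 1 = t) (hmiss : p ∉ γ '' Set.Icc 0 1) :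
    edist s t < eVariationOn γ (Set.Icc 0 1) :=
  eVariationOn_gt_edist_of_avoids_general s t p hp γ hγ h0 h1 hmiss
end

section
/- Let s, t ∈ ℝ² (Euclidean plane), let p be a point of the open segment between s and t, let ρ > 0, and let γ : ℝ → ℝ² be continuous on [0,1] with γ(0) = s, γ(1) = t, and dist(γ(x), p) ≥ ρ for all x ∈ [0,1]. Then eVariationOn γ [0,1] ≥ √(dist(s,p)² + ρ²) + √(dist(p,t)² + ρ²); in particular, since ρ > 0, this is strictly greater than edist(s, t) = dist(s,p) + dist(p,t). -/
/-!
Let `v = t - s`. Since `p` lies between `s` and `t`, the function `x ↦ ⟪γ x - p, v⟫` is `≤ 0` at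
`0` and `≥ 0` at `1`, so the path meets the line through `p` perpendicular to `st` at some point
`q = γ c`, with `dist q p ≥ ρ`. By Pythagoras `dist s q ≥ √(dist s p² + ρ²)` and
`dist q t ≥ √(dist p t² + ρ²)`, and the partition `0 ≤ c ≤ 1` bounds the variation from below
by `dist s q + dist q t`.
-/

open Set RealInnerProductSpace

section Variation

variable {α E : Type*} [LinearOrder α] [PseudoEMetricSpace E]

theorem edist_add_edist_le_eVariationOn_Icc (f : α → E) {a b c : α} (hab : a ≤ b)
    (hbc : b ≤ c) :
    edist (f a) (f b) + edist (f b) (f c) ≤ eVariationOn f (Icc a c) := by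
  have hsplit := eVariationOn.Icc_add_Icc f hab hbc (mem_univ b)
  simp only [univ_inter] at hsplit
  rw [← hsplit]
  exact add_le_add (eVariationOn.edist_le f (left_mem_Icc.2 hab) (right_mem_Icc.2 hab))
    (eVariationOn.edist_le f (left_mem_Icc.2 hbc) (right_mem_Icc.2 hbc))

end Variation

section Geometry

variable {E : Type*} [NormedAddCommGroup E] [InnerProductSpace ℝ E]

theorem exists_sub_eq_smul_of_mem_segment {s t p : E} (hp : p ∈ segment ℝ s t) :
    ∃ θ ∈ Icc (0 : ℝ) 1, s - p = (-θ) • (t - s) ∧ t - p = (1 - θ) • (t - s) := by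
  rw [segment_eq_image'] at hp
  obtain ⟨θ, hθ, rfl⟩ := hp
  exact ⟨θ, hθ, by module, by module⟩

theorem sqrt_dist_sq_add_sq_le_dist {x p q : E} {ρ : ℝ} (hρ : 0 ≤ ρ)
    (horth : ⟪x - p, q - p⟫ = 0) (hq : ρ ≤ dist q p) :
    √(dist x p ^ 2 + ρ ^ 2) ≤ dist x q := by
  have hpyth : dist x q ^ 2 = dist x p ^ 2 + dist q p ^ 2 := by
    rw [dist_eq_norm, dist_eq_norm, dist_eq_norm, ← sub_sub_sub_cancel_right x q p,
      norm_sub_sq_real, horth, mul_zero, sub_zero]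
  rw [Real.sqrt_le_iff, hpyth]
  exact ⟨dist_nonneg, by gcongr⟩

variable {s t p : E} {ρ : ℝ} {γ : ℝ → E} {a b : ℝ}

theorem exists_mem_Icc_inner_sub_eq_zero_of_mem_segment (hp : p ∈ segment ℝ s t) (hab : a ≤ b)
    (hγ : ContinuousOn γ (Icc a b)) (ha : γ a = s) (hb : γ b = t) :
    ∃ c ∈ Icc a b, ⟪γ c - p, t - s⟫ = 0 := by
  obtain ⟨θ, ⟨hθ0, hθ1⟩, hsp, htp⟩ := exists_sub_eq_smul_of_mem_segment hp
  have hcont : ContinuousOn (fun x ↦ ⟪γ x - p, t - s⟫) (Icc a b) :=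
    (hγ.sub continuousOn_const).inner continuousOn_const
  have hsign : (0 : ℝ) ∈ Icc ⟪γ a - p, t - s⟫ ⟪γ b - p, t - s⟫ := by
    rw [ha, hb, hsp, htp, real_inner_smul_left, real_inner_smul_left]
    constructor <;> nlinarith [real_inner_self_nonneg (x := t - s)]
  exact intermediate_value_Icc hab hcont hsign

theorem ofReal_sqrt_add_sqrt_le_eVariationOn (hp : p ∈ segment ℝ s t) (hρ : 0 ≤ ρ)
    (hab : a ≤ b) (hγ : ContinuousOn γ (Icc a b)) (ha : γ a = s) (hb : γ b = t)
    (hfar : ∀ x ∈ Icc a b, ρ ≤ dist (γ x) p) :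
    ENNReal.ofReal (√(dist s p ^ 2 + ρ ^ 2) + √(dist p t ^ 2 + ρ ^ 2)) ≤
      eVariationOn γ (Icc a b) := by
  obtain ⟨c, hc, hcross⟩ := exists_mem_Icc_inner_sub_eq_zero_of_mem_segment hp hab hγ ha hb
  obtain ⟨θ, -, hsp, htp⟩ := exists_sub_eq_smul_of_mem_segment hp
  have horth : ∀ κ : ℝ, ⟪κ • (t - s), γ c - p⟫ = 0 := fun κ ↦ by
    rw [real_inner_smul_left, real_inner_comm, hcross, mul_zero]
  have hs : √(dist s p ^ 2 + ρ ^ 2) ≤ dist s (γ c) :=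
    sqrt_dist_sq_add_sq_le_dist hρ (hsp ▸ horth _) (hfar c hc)
  have ht : √(dist p t ^ 2 + ρ ^ 2) ≤ dist (γ c) t := by
    rw [dist_comm p, dist_comm (γ c)]
    exact sqrt_dist_sq_add_sq_le_dist hρ (htp ▸ horth _) (hfar c hc)
  calc ENNReal.ofReal (√(dist s p ^ 2 + ρ ^ 2) + √(dist p t ^ 2 + ρ ^ 2))
      ≤ ENNReal.ofReal (dist s (γ c) + dist (γ c) t) := ENNReal.ofReal_le_ofReal (add_le_add hs ht)
    _ = edist (γ a) (γ c) + edist (γ c) (γ b) := by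
      rw [ENNReal.ofReal_add dist_nonneg dist_nonneg, ha, hb, edist_dist, edist_dist]
    _ ≤ eVariationOn γ (Icc a b) := edist_add_edist_le_eVariationOn_Icc γ hc.1 hc.2

end Geometry

/-- A path from `s` to `t` staying at distance at least `ρ > 0` from a point `p` of the open
segment between `s` and `t` has length at least `√(dist(s,p)² + ρ²) + √(dist(p,t)² + ρ²)`;
in particular it is strictly longer than the Euclidean distance `dist(s,p) + dist(p,t)`. -/
theorem eVariationOn_ge_of_avoids_ball (s t p : EuclideanSpace ℝ (Fin 2))
    (hp : p ∈ openSegment ℝ s t) (ρ : ℝ) (hρ : 0 < ρ)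
    (γ : ℝ → EuclideanSpace ℝ (Fin 2)) (hγ : ContinuousOn γ (Set.Icc 0 1))
    (h0 : γ 0 = s) (h1 : γ 1 = t) (hfar : ∀ x ∈ Set.Icc (0:ℝ) 1, ρ ≤ dist (γ x) p) :
    ENNReal.ofReal (Real.sqrt (dist s p ^ 2 + ρ ^ 2) + Real.sqrt (dist p t ^ 2 + ρ ^ 2)) ≤
        eVariationOn γ (Set.Icc 0 1) ∧
      edist s t < eVariationOn γ (Set.Icc 0 1) := by
  have hbound := ofReal_sqrt_add_sqrt_le_eVariationOn (openSegment_subset_segment ℝ s t hp)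
    hρ.le zero_le_one hγ h0 h1 hfar
  refine ⟨hbound, lt_of_lt_of_le ?_ hbound⟩
  have hlt (d : ℝ) (hd : 0 ≤ d) : d < √(d ^ 2 + ρ ^ 2) :=
    (Real.lt_sqrt hd).2 (by nlinarith)
  calc edist s t ≤ ENNReal.ofReal (dist s p + dist p t) := by
        rw [edist_dist]; exact ENNReal.ofReal_le_ofReal (dist_triangle s p t)
    _ < _ := (ENNReal.ofReal_lt_ofReal_iff (by positivity)).2
        (add_lt_add (hlt _ dist_nonneg) (hlt _ dist_nonneg))
end
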